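/- arXiv:2205.11013 — 2 statements merged into one kernel-verified Lean document; each statement's English description precedes it below -/
import Mathlib

section
/- For t > 0 and x = (x₁,x₂) ∈ ℝ², the two families are summable and satisfy Σ_{(n,m)∈ℤ²} e^{−4π²(n²+m²)t} e^{2πi(n x₁ + m x₂)} = Σ_{(n,m)∈ℤ²} (1/(4πt)) e^{−((x₁−n)² + (x₂−m)²)/(4t)}. In particular the left-hand side, which defines the heat kernel Φ(t,x) on the torus, is a real number and is strictly positive. -/
/-!
Both series factor into products of one-dimensional series over `ℤ`. In one dimension the
Fourier series is the Jacobi theta function `θ(y, τ)` at `τ = 4πit`, and Jacobi's functional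
equation (Poisson summation for a Gaussian) turns it into the periodized Gaussian
`Σₙ e^{-(y-n)²/4t} / √(4πt)`. Absolute convergence makes the sum of a product over `ℤ × ℤ` the
product of the sums.
-/

open scoped Real

noncomputable section

/-- One term of the Fourier series defining the torus heat kernel. -/
noncomputable def heatTerm (t : ℝ) (x : ℝ × ℝ) (k : ℤ × ℤ) : ℂ :=
  Complex.exp (-4 * (Real.pi : ℂ)^2 * ((k.1 : ℂ)^2 + (k.2 : ℂ)^2) * (t : ℂ)) *
    Complex.exp (2 * (Real.pi : ℂ) * Complex.I * ((k.1 : ℂ) * (x.1 : ℂ) + (k.2 : ℂ) * (x.2 : ℂ)))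

/-- One term of the Gaussian (periodized heat kernel) series. -/
noncomputable def gaussTerm (t : ℝ) (x : ℝ × ℝ) (k : ℤ × ℤ) : ℝ :=
  (1 / (4 * Real.pi * t)) * Real.exp (-(((x.1 - k.1)^2 + (x.2 - k.2)^2) / (4 * t)))

open Complex

theorem HasSum.mul_of_finiteDimensional {ι κ R : Type*} [NormedRing R] [NormedAlgebra ℝ R]
    [FiniteDimensional ℝ R] {f : ι → R} {g : κ → R} {a b : R} (hf : HasSum f a)
    (hg : HasSum g b) : HasSum (fun k : ι × κ ↦ f k.1 * g k.2) (a * b) :=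
  haveI := FiniteDimensional.complete ℝ R
  hf.mul hg (summable_mul_of_summable_norm hf.summable.norm hg.summable.norm)

def gaussTerm₁ (t y : ℝ) (n : ℤ) : ℝ :=
  Real.exp (-((y - n) ^ 2 / (4 * t))) / Real.sqrt (4 * π * t)

lemma gaussTerm₁_pos {t : ℝ} (ht : 0 < t) (y : ℝ) (n : ℤ) : 0 < gaussTerm₁ t y n := by
  have : 0 < Real.sqrt (4 * π * t) := Real.sqrt_pos.mpr (by positivity)
  unfold gaussTerm₁
  positivity

lemma heatTerm_eq_mul (t : ℝ) (x : ℝ × ℝ) (k : ℤ × ℤ) :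
    heatTerm t x k = jacobiTheta₂_term k.1 x.1 (4 * π * t * I) *
      jacobiTheta₂_term k.2 x.2 (4 * π * t * I) := by
  simp only [heatTerm, jacobiTheta₂_term, ← Complex.exp_add]
  congr 1
  ring_nf
  rw [I_sq]
  ring

lemma gaussTerm_eq_mul {t : ℝ} (ht : 0 < t) (x : ℝ × ℝ) (k : ℤ × ℤ) :
    gaussTerm t x k = gaussTerm₁ t x.1 k.1 * gaussTerm₁ t x.2 k.2 := by
  have hsqrt : Real.sqrt (4 * π * t) * Real.sqrt (4 * π * t) = 4 * π * t :=
    Real.mul_self_sqrt (by positivity)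
  rw [gaussTerm, gaussTerm₁, gaussTerm₁, div_mul_div_comm, hsqrt, ← Real.exp_add,
    one_div_mul_eq_div]
  congr 2
  ring

lemma gaussTerm_pos {t : ℝ} (ht : 0 < t) (x : ℝ × ℝ) (k : ℤ × ℤ) : 0 < gaussTerm t x k := by
  rw [gaussTerm_eq_mul ht]
  exact mul_pos (gaussTerm₁_pos ht _ _) (gaussTerm₁_pos ht _ _)

/-- The summands of the right-hand side of `jacobiTheta₂_functional_equation` at `τ = 4πit`. -/
lemma ofReal_gaussTerm₁ {t : ℝ} (ht : 0 < t) (y : ℝ) (n : ℤ) :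
    (gaussTerm₁ t y n : ℂ) = 1 / (-I * (4 * π * t * I)) ^ (1 / 2 : ℂ) *
      cexp (-π * I * y ^ 2 / (4 * π * t * I)) *
      jacobiTheta₂_term n (y / (4 * π * t * I)) (-1 / (4 * π * t * I)) := by
  have hsqrt : (-I * (4 * π * t * I)) ^ (1 / 2 : ℂ) = (Real.sqrt (4 * π * t) : ℂ) := by
    rw [Real.sqrt_eq_rpow, ofReal_cpow (by positivity)]
    push_cast
    ring_nf
    rw [I_sq]
    ring_nf
  have hπ : (π : ℂ) ≠ 0 := ofReal_ne_zero.mpr Real.pi_ne_zero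
  have ht' : (t : ℂ) ≠ 0 := ofReal_ne_zero.mpr ht.ne'
  rw [hsqrt, gaussTerm₁, jacobiTheta₂_term, mul_assoc (1 / _), ← Complex.exp_add,
    one_div_mul_eq_div, ofReal_div, ofReal_exp]
  congr 2
  push_cast
  field_simp
  ring_nf

lemma hasSum_ofReal_gaussTerm₁ {t : ℝ} (ht : 0 < t) (y : ℝ) :
    HasSum (fun n ↦ (gaussTerm₁ t y n : ℂ)) (jacobiTheta₂ y (4 * π * t * I)) := by
  have hτ : 0 < (-1 / (4 * π * t * I)).im := by
    have : -1 / (4 * π * t * I) = ((1 / (4 * π * t) : ℝ) : ℂ) * I := by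
      push_cast
      field_simp
      rw [I_sq]
      ring
    rw [this, mul_I_im, ofReal_re]
    positivity
  rw [jacobiTheta₂_functional_equation]
  simpa only [ofReal_gaussTerm₁ ht] using (hasSum_jacobiTheta₂_term _ hτ).mul_left _

lemma summable_gaussTerm₁ {t : ℝ} (ht : 0 < t) (y : ℝ) : Summable (gaussTerm₁ t y) :=
  summable_ofReal.mp (hasSum_ofReal_gaussTerm₁ ht y).summable

lemma jacobiTheta₂_eq_tsum_gaussTerm₁ {t : ℝ} (ht : 0 < t) (y : ℝ) :
    jacobiTheta₂ y (4 * π * t * I) = ∑' n, gaussTerm₁ t y n := by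
  rw [ofReal_tsum, (hasSum_ofReal_gaussTerm₁ ht y).tsum_eq]

/-- **Poisson summation for the torus heat kernel.**
For `t > 0` and `x ∈ ℝ²`, both families are summable,
`Σ_{(n,m)∈ℤ²} e^{-4π²(n²+m²)t} e^{2πi(nx₁+mx₂)}
  = Σ_{(n,m)∈ℤ²} (1/(4πt)) e^{-((x₁-n)²+(x₂-m)²)/(4t)}`,
and in particular the left-hand side is a (strictly positive) real number. -/
theorem heat_kernel_poisson_summation (t : ℝ) (ht : 0 < t) (x : ℝ × ℝ) :
    Summable (heatTerm t x) ∧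
    Summable (gaussTerm t x) ∧
    (∑' k : ℤ × ℤ, heatTerm t x k) = ((∑' k : ℤ × ℤ, gaussTerm t x k : ℝ) : ℂ) ∧
    0 < ∑' k : ℤ × ℤ, gaussTerm t x k := by
  have hτ : 0 < (4 * π * t * I).im := by simp [ht, Real.pi_pos]
  have hheat := (hasSum_jacobiTheta₂_term (x.1 : ℂ) hτ).mul_of_finiteDimensional
    (hasSum_jacobiTheta₂_term (x.2 : ℂ) hτ)
  rw [← funext (heatTerm_eq_mul t x)] at hheat
  have hgauss := (summable_gaussTerm₁ ht x.1).hasSum.mul_of_finiteDimensional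
    (summable_gaussTerm₁ ht x.2).hasSum
  rw [← funext (gaussTerm_eq_mul ht x)] at hgauss
  refine ⟨hheat.summable, hgauss.summable, ?_, ?_⟩
  · rw [hheat.tsum_eq, hgauss.tsum_eq, jacobiTheta₂_eq_tsum_gaussTerm₁ ht,
      jacobiTheta₂_eq_tsum_gaussTerm₁ ht, ofReal_mul]
  · exact hgauss.summable.tsum_pos (fun k ↦ (gaussTerm_pos ht x k).le) 0 (gaussTerm_pos ht x 0)

end
end

section
/- Let γ_n, γ be probability measures on 𝕋² such that γ_n → γ weakly. Let f : 𝕋² × 𝕋² → ℝ be bounded and Borel measurable, continuous at every point (x,y) with x ≠ y, and with f(x,x) = 0 for all x. Assume lim_{δ→0+} sup_n (γ_n ⊗ γ_n)( { (x,y) : r(x,y) ≤ δ } ) = 0. Then ∬_{𝕋²×𝕋²} f d(γ_n ⊗ γ_n) → ∬_{𝕋²×𝕋²} f d(γ ⊗ γ) as n → ∞. -/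
/-!
Cut `f` off near the diagonal: with a continuous ramp `χ_δ` vanishing where `r ≤ δ/2` and equal
to `1` where `r ≥ δ`, the function `f χ_δ` is bounded and continuous, so its integrals converge
because `γ_n ⊗ γ_n → γ ⊗ γ` weakly. The error `∫ f (1 - χ_δ)` is at most `sup |f|` times the mass
of `{r < δ}`, which is uniformly small for `γ_n ⊗ γ_n` by the concentration hypothesis, and also
for `γ ⊗ γ` by the portmanteau theorem applied to the open set `{r < δ}`.
-/

open MeasureTheory

noncomputable section

/-- The two-dimensional torus `ℝ²/ℤ²`, with Haar (Lebesgue) measure of total mass one. -/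
abbrev T2 : Type := AddCircle (1:ℝ) × AddCircle (1:ℝ)

/-- The Euclidean torus metric `r(x,y) = inf_{k ∈ ℤ²} |x - y - k|`. -/
noncomputable def rT (x y : T2) : ℝ := Real.sqrt ((dist x.1 y.1)^2 + (dist x.2 y.2)^2)

open Filter Topology

def cutoff (δ t : ℝ) : ℝ := max 0 (min 1 (2 * t / δ - 1))

lemma continuous_cutoff (δ : ℝ) : Continuous (cutoff δ) := by
  unfold cutoff
  fun_prop

lemma cutoff_nonneg (δ t : ℝ) : 0 ≤ cutoff δ t := le_max_left _ _

lemma cutoff_le_one (δ t : ℝ) : cutoff δ t ≤ 1 := max_le zero_le_one (min_le_left _ _)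

lemma abs_mul_cutoff_le (a δ t : ℝ) : |a * cutoff δ t| ≤ |a| := by
  rw [abs_mul, abs_of_nonneg (cutoff_nonneg δ t)]
  exact mul_le_of_le_one_right (abs_nonneg a) (cutoff_le_one δ t)

lemma cutoff_eq_zero {δ t : ℝ} (hδ : 0 < δ) (ht : t ≤ δ / 2) : cutoff δ t = 0 := by
  refine max_eq_left (min_le_of_right_le ?_)
  rw [sub_nonpos, div_le_one hδ]
  linarith

lemma cutoff_eq_one {δ t : ℝ} (hδ : 0 < δ) (ht : δ ≤ t) : cutoff δ t = 1 := by
  have h : 1 ≤ 2 * t / δ - 1 := by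
    rw [le_sub_iff_add_le, le_div_iff₀ hδ]
    linarith
  rw [cutoff, min_eq_left h, max_eq_right zero_le_one]

section

variable {Y : Type*} [TopologicalSpace Y] {f ρ : Y → ℝ}

lemma continuous_mul_cutoff (hρ : Continuous ρ) (hf : ∀ y, 0 < ρ y → ContinuousAt f y)
    {δ : ℝ} (hδ : 0 < δ) : Continuous fun y => f y * cutoff δ (ρ y) := by
  refine continuous_iff_continuousAt.2 fun y => ?_
  rcases lt_or_ge 0 (ρ y) with hy | hy
  · exact (hf y hy).mul ((continuous_cutoff δ).comp hρ).continuousAt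
  · have hnear : ∀ᶠ z in 𝓝 y, ρ z < δ / 2 :=
      hρ.continuousAt.eventually_lt continuousAt_const (by linarith)
    have hzero : (fun _ => (0 : ℝ)) =ᶠ[𝓝 y] fun z => f z * cutoff δ (ρ z) :=
      hnear.mono fun z hz => by simp [cutoff_eq_zero hδ hz.le]
    exact continuousAt_const.congr hzero

variable [MeasurableSpace Y] [OpensMeasurableSpace Y]

lemma abs_integral_sub_integral_mul_cutoff_le (μ : Measure Y) [IsFiniteMeasure μ]
    (hf : Measurable f) {C : ℝ} (hC : ∀ y, |f y| ≤ C) (hρ : Continuous ρ) {δ : ℝ} (hδ : 0 < δ) :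
    |∫ y, f y ∂μ - ∫ y, f y * cutoff δ (ρ y) ∂μ| ≤ C * μ.real {y | ρ y < δ} := by
  have hfi : Integrable f μ := .of_bound hf.aestronglyMeasurable C (ae_of_all _ hC)
  have hgi : Integrable (fun y => f y * cutoff δ (ρ y)) μ :=
    .of_bound (hf.mul ((continuous_cutoff δ).measurable.comp hρ.measurable)).aestronglyMeasurable
      C (ae_of_all _ fun y => (abs_mul_cutoff_le _ _ _).trans (hC y))
  have hsupp : ∀ y ∉ {y | ρ y < δ}, f y - f y * cutoff δ (ρ y) = 0 := fun y hy => by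
    simp [cutoff_eq_one hδ (not_lt.1 hy)]
  rw [← integral_sub hfi hgi, ← setIntegral_eq_integral_of_forall_compl_eq_zero hsupp,
    ← Real.norm_eq_abs]
  refine norm_setIntegral_le_of_norm_le_const (measure_lt_top μ _) fun y _ => ?_
  rw [← mul_one_sub, Real.norm_eq_abs, abs_mul, abs_of_nonneg (sub_nonneg.2 (cutoff_le_one _ _))]
  exact (mul_le_of_le_one_right (abs_nonneg _) (by linarith [cutoff_nonneg δ (ρ y)])).trans (hC y)

end

namespace MeasureTheory.ProbabilityMeasure

variable {Y ι : Type*} [TopologicalSpace Y] [MeasurableSpace Y] [OpensMeasurableSpace Y]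
  [HasOuterApproxClosed Y] {L : Filter ι} [L.NeBot] {P : ι → ProbabilityMeasure Y}
  {P₀ : ProbabilityMeasure Y}

lemma measure_lt_le_iSup_measure_le_of_tendsto (hP : Tendsto P L (𝓝 P₀)) {ρ : Y → ℝ}
    (hρ : Continuous ρ) (δ : ℝ) :
    (P₀ : Measure Y) {y | ρ y < δ} ≤ ⨆ i, (P i : Measure Y) {y | ρ y ≤ δ} :=
  calc (P₀ : Measure Y) {y | ρ y < δ}
      ≤ L.liminf fun i => (P i : Measure Y) {y | ρ y < δ} :=
        le_liminf_measure_open_of_tendsto hP (isOpen_lt hρ continuous_const)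
    _ ≤ L.limsup fun i => (P i : Measure Y) {y | ρ y < δ} := liminf_le_limsup
    _ ≤ ⨆ i, (P i : Measure Y) {y | ρ y < δ} := limsup_le_iSup
    _ ≤ ⨆ i, (P i : Measure Y) {y | ρ y ≤ δ} :=
        iSup_mono fun i => measure_mono (Set.ofPred_subset_ofPred.2 fun _ => le_of_lt)

theorem tendsto_integral_of_continuousAt_of_tendsto_iSup_measure_le (hP : Tendsto P L (𝓝 P₀))
    {ρ : Y → ℝ} (hρ : Continuous ρ) {f : Y → ℝ} (hf : Measurable f)
    (hf_bdd : ∃ C, ∀ y, |f y| ≤ C) (hf_cont : ∀ y, 0 < ρ y → ContinuousAt f y)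
    (hconc : Tendsto (fun δ => ⨆ i, (P i : Measure Y) {y | ρ y ≤ δ}) (𝓝[>] 0) (𝓝 0)) :
    Tendsto (fun i => ∫ y, f y ∂(P i : Measure Y)) L (𝓝 (∫ y, f y ∂(P₀ : Measure Y))) := by
  obtain ⟨C, hC⟩ := hf_bdd
  have hC₀ : 0 ≤ C :=
    (abs_nonneg _).trans (hC (nonempty_of_isProbabilityMeasure (P₀ : Measure Y)).some)
  set s := fun δ => ⨆ i, (P i : Measure Y) {y | ρ y ≤ δ}
  have hsmall : Tendsto (fun δ => C * (s δ).toReal) (𝓝[>] 0) (𝓝 0) := by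
    simpa using ((ENNReal.tendsto_toReal ENNReal.zero_ne_top).comp hconc).const_mul C
  refine Metric.tendsto_nhds.2 fun ε hε => ?_
  obtain ⟨δ, hδε, hδ⟩ := ((hsmall.eventually (gt_mem_nhds (by positivity : (0 : ℝ) < ε / 3))).and
    self_mem_nhdsWithin).exists
  set g := fun y => f y * cutoff δ (ρ y)
  have hs_ne_top : s δ ≠ ⊤ :=
    ne_top_of_le_ne_top ENNReal.one_ne_top (iSup_le fun i => prob_le_one)
  have happrox : ∀ μ : ProbabilityMeasure Y, (μ : Measure Y) {y | ρ y < δ} ≤ s δ →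
      dist (∫ y, f y ∂(μ : Measure Y)) (∫ y, g y ∂(μ : Measure Y)) < ε / 3 := fun μ hμ =>
    calc _ ≤ C * (μ : Measure Y).real {y | ρ y < δ} :=
          abs_integral_sub_integral_mul_cutoff_le _ hf hC hρ hδ
      _ ≤ C * (s δ).toReal := by gcongr; exact ENNReal.toReal_mono hs_ne_top hμ
      _ < ε / 3 := hδε
  have hPi : ∀ i, (P i : Measure Y) {y | ρ y < δ} ≤ s δ := fun i =>
    (measure_mono (Set.ofPred_subset_ofPred.2 fun _ => le_of_lt)).trans
      (le_iSup (fun i => (P i : Measure Y) {y | ρ y ≤ δ}) i)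
  have hg : Tendsto (fun i => ∫ y, g y ∂(P i : Measure Y)) L (𝓝 (∫ y, g y ∂(P₀ : Measure Y))) :=
    tendsto_iff_forall_integral_tendsto.1 hP <| .ofNormedAddCommGroup g
      (continuous_mul_cutoff hρ hf_cont hδ) C fun y => (abs_mul_cutoff_le _ _ _).trans (hC y)
  filter_upwards [Metric.tendsto_nhds.1 hg (ε / 3) (by positivity)] with i hi
  calc _ ≤ _ + _ + _ :=
        dist_triangle4 _ (∫ y, g y ∂(P i : Measure Y)) (∫ y, g y ∂(P₀ : Measure Y)) _
    _ < ε / 3 + ε / 3 + ε / 3 := by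
        rw [dist_comm (∫ y, g y ∂(P₀ : Measure Y))]
        exact add_lt_add (add_lt_add (happrox _ (hPi i)) hi)
          (happrox _ (measure_lt_le_iSup_measure_le_of_tendsto hP hρ δ))
    _ = ε := by ring

end MeasureTheory.ProbabilityMeasure

-- Without this shortcut, finding the topology on `ProbabilityMeasure (T2 × T2)` exceeds the default
-- `synthInstance.maxSize`.
instance : OpensMeasurableSpace (T2 × T2) := inferInstance

lemma continuous_rT : Continuous fun p : T2 × T2 => rT p.1 p.2 := by
  unfold rT
  fun_prop

lemma rT_self (x : T2) : rT x x = 0 := by simp [rT]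

theorem quadratic_functional_weak_convergence_general
    (γseq : ℕ → Measure T2) (γ : Measure T2)
    [∀ n, IsProbabilityMeasure (γseq n)] [IsProbabilityMeasure γ]
    (hweak : ∀ g : T2 → ℝ, Continuous g →
      Filter.Tendsto (fun n => ∫ x, g x ∂(γseq n)) Filter.atTop (nhds (∫ x, g x ∂γ)))
    (f : T2 × T2 → ℝ) (hf_meas : Measurable f)
    (hf_bdd : ∃ C : ℝ, ∀ p, |f p| ≤ C)
    (hf_cont : ∀ p : T2 × T2, p.1 ≠ p.2 → ContinuousAt f p)
    (hconc : Filter.Tendsto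
      (fun δ : ℝ => ⨆ n, ((γseq n).prod (γseq n)) {p : T2 × T2 | rT p.1 p.2 ≤ δ})
      (nhdsWithin 0 (Set.Ioi 0)) (nhds 0)) :
    Filter.Tendsto (fun n => ∫ p, f p ∂((γseq n).prod (γseq n))) Filter.atTop
      (nhds (∫ p, f p ∂(γ.prod γ))) := by
  let μs : ℕ → ProbabilityMeasure T2 := fun n => ⟨γseq n, inferInstance⟩
  let μ : ProbabilityMeasure T2 := ⟨γ, inferInstance⟩
  have hμ : Tendsto μs atTop (𝓝 μ) :=
    ProbabilityMeasure.tendsto_iff_forall_integral_tendsto.2 fun g => hweak g g.continuous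
  have hprod : Tendsto (fun n => (μs n).prod (μs n)) atTop (𝓝 (μ.prod μ)) :=
    (ProbabilityMeasure.continuous_prod.tendsto (μ, μ)).comp (hμ.prodMk_nhds hμ)
  refine ProbabilityMeasure.tendsto_integral_of_continuousAt_of_tendsto_iSup_measure_le hprod
    continuous_rT hf_meas hf_bdd (fun p hp => hf_cont p fun hdiag => ?_) hconc
  exact hp.ne' (by rw [hdiag, rT_self])

/-- **Off-diagonal continuity of quadratic functionals under weak convergence.**
Let `γ_n → γ` weakly (probability measures on `𝕋²`), let `f` be bounded, Borel, zero on
the diagonal and continuous off the diagonal, and assume the uniform concentration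
condition `lim_{δ→0+} sup_n (γ_n ⊗ γ_n)({r(x,y) ≤ δ}) = 0`.  Then
`∬ f d(γ_n ⊗ γ_n) → ∬ f d(γ ⊗ γ)`. -/
theorem quadratic_functional_weak_convergence
    (γseq : ℕ → Measure T2) (γ : Measure T2)
    [∀ n, IsProbabilityMeasure (γseq n)] [IsProbabilityMeasure γ]
    (hweak : ∀ g : T2 → ℝ, Continuous g →
      Filter.Tendsto (fun n => ∫ x, g x ∂(γseq n)) Filter.atTop (nhds (∫ x, g x ∂γ)))
    (f : T2 × T2 → ℝ) (hf_meas : Measurable f)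
    (hf_bdd : ∃ C : ℝ, ∀ p, |f p| ≤ C)
    (hf_cont : ∀ p : T2 × T2, p.1 ≠ p.2 → ContinuousAt f p)
    (hf_diag : ∀ x : T2, f (x, x) = 0)
    (hconc : Filter.Tendsto
      (fun δ : ℝ => ⨆ n, ((γseq n).prod (γseq n)) {p : T2 × T2 | rT p.1 p.2 ≤ δ})
      (nhdsWithin 0 (Set.Ioi 0)) (nhds 0)) :
    Filter.Tendsto (fun n => ∫ p, f p ∂((γseq n).prod (γseq n))) Filter.atTop
      (nhds (∫ p, f p ∂(γ.prod γ))) :=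
  quadratic_functional_weak_convergence_general γseq γ hweak f hf_meas hf_bdd hf_cont hconc
end
end
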